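/- Define f on the planar disk B(2) = {x ∈ ℂ : |x| < 2} by f(x) = g(|x|)·x/|x| for x ≠ 0 and f(0) = 0, where g is the piecewise-linear radial homeomorphism of [0,2) given in the construction (g(t) = (3/2)t on [0,1/2), g = g_n affine on [1−2^{−n!}, 1−2^{−(n+1)!}) mapping this interval onto [1−2^{−(n+1)!}, 1−2^{−(n+2)!}), and g(t) = t on [1,2)). Then f : B(2) → B(2) is (1,4)-coarsely quasihyperbolic: |k_{B(2)}(f(x),f(y)) − k_{B(2)}(x,y)| ≤ 4 for all x,y. -/

import Mathlib

open Set Metric MeasureTheory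

noncomputable section

variable {E : Type*} [NormedAddCommGroup E]

/-- Distance from a point to the boundary (= complement) of `D`. -/
def dB (D : Set E) (z : E) : ℝ := Metric.infDist z Dᶜ

/-- `D` is a proper subdomain of the ambient space. -/
def IsProperDomain (D : Set E) : Prop := IsOpen D ∧ IsConnected D ∧ Dᶜ.Nonempty

/-- A rectifiable arc inside `D`, parametrized by arclength on `[a,b]`. -/
structure IsArc (D : Set E) (γ : ℝ → E) (a b : ℝ) : Prop where
  le : a ≤ b
  lip : LipschitzOnWith 1 γ (Set.Icc a b)
  unit : ∀ s t, s ∈ Set.Icc a b → t ∈ Set.Icc a b → s ≤ t →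
    eVariationOn γ (Set.Icc s t) = ENNReal.ofReal (t - s)
  mem : ∀ t ∈ Set.Icc a b, γ t ∈ D

/-- Quasihyperbolic length of the piece on `[a,b]` of an arclength-parametrized arc. -/
def qhLen (D : Set E) (γ : ℝ → E) (a b : ℝ) : ℝ := ∫ t in a..b, 1 / dB D (γ t)

/-- The quasihyperbolic distance in `D`: infimum of quasihyperbolic lengths of
arcs joining the two points. -/
def qhDist (D : Set E) (x y : E) : ℝ :=
  sInf { L : ℝ | ∃ T : ℝ, ∃ γ : ℝ → E,
    IsArc D γ 0 T ∧ γ 0 = x ∧ γ T = y ∧ L = qhLen D γ 0 T }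

/-- `γ` is a `c`-quasigeodesic in `D` on `[a,b]`. -/
def IsQuasigeodesicOn (D : Set E) (c : ℝ) (γ : ℝ → E) (a b : ℝ) : Prop :=
  IsArc D γ a b ∧ ∀ s t, s ∈ Set.Icc a b → t ∈ Set.Icc a b → s ≤ t →
    qhLen D γ s t ≤ c * qhDist D (γ s) (γ t)

/-- The coefficient `c_{x,y}^λ = min (1 + λ/(2 k_D(x,y))) (9/8)`. -/
def cLam (D : Set E) (lam : ℝ) (x y : E) : ℝ :=
  min (1 + lam / (2 * qhDist D x y)) (9 / 8)

/-- `γ` is a `λ`-curve in `D` on `[a,b]`: a `c_{x,y}^λ`-quasigeodesic where `x,y`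
are its endpoints. -/
def IsLamCurve (D : Set E) (lam : ℝ) (γ : ℝ → E) (a b : ℝ) : Prop :=
  IsQuasigeodesicOn D (cLam D lam (γ a) (γ b)) γ a b

/-- `γ` is `h`-short in `D`. -/
def IsShort (D : Set E) (h : ℝ) (γ : ℝ → E) (a b : ℝ) : Prop :=
  IsArc D γ a b ∧ ∀ s t, s ∈ Set.Icc a b → t ∈ Set.Icc a b → s ≤ t →
    qhLen D γ s t ≤ qhDist D (γ s) (γ t) + h

/-- The point `w` lies within quasihyperbolic distance `C` of the union of the
two given sides. -/
def WithinOfSides (D : Set E) (C : ℝ) (w : E) (α : ℝ → E) (a b : ℝ)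
    (α' : ℝ → E) (a' b' : ℝ) : Prop :=
  ∃ s : ℝ, (s ∈ Set.Icc a b ∧ qhDist D w (α s) ≤ C) ∨
    (s ∈ Set.Icc a' b' ∧ qhDist D w (α' s) ≤ C)

/-- `(D, k_D)` is a `(C,h)`-Rips space: every side of an `h`-short triangle lies
in the `C`-neighbourhood of the two other sides. -/
def IsRips (D : Set E) (C h : ℝ) : Prop :=
  ∀ (α₁ α₂ α₃ : ℝ → E) (a₁ b₁ a₂ b₂ a₃ b₃ : ℝ),
    IsShort D h α₁ a₁ b₁ → IsShort D h α₂ a₂ b₂ → IsShort D h α₃ a₃ b₃ →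
    α₁ b₁ = α₂ a₂ → α₂ b₂ = α₃ a₃ → α₃ b₃ = α₁ a₁ →
    (∀ t ∈ Set.Icc a₁ b₁, WithinOfSides D C (α₁ t) α₂ a₂ b₂ α₃ a₃ b₃) ∧
    (∀ t ∈ Set.Icc a₂ b₂, WithinOfSides D C (α₂ t) α₃ a₃ b₃ α₁ a₁ b₁) ∧
    (∀ t ∈ Set.Icc a₃ b₃, WithinOfSides D C (α₃ t) α₁ a₁ b₁ α₂ a₂ b₂)

/-- `D` is `δ`-Gromov hyperbolic with respect to the quasihyperbolic metric. -/
def IsGromovHyp (D : Set E) (δ : ℝ) : Prop :=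
  ∀ x ∈ D, ∀ y ∈ D, ∀ z ∈ D, ∀ p ∈ D,
    min ((qhDist D p x + qhDist D p y - qhDist D x y) / 2)
        ((qhDist D p y + qhDist D p z - qhDist D y z) / 2) - δ ≤
      (qhDist D p x + qhDist D p z - qhDist D x z) / 2

/-- `μ` is a thin-triangles constant for triangles of `c₀`-quasigeodesics in `D`. -/
def ThinTriangles (D : Set E) (c₀ μ : ℝ) : Prop :=
  ∀ (γ₁ γ₂ γ₃ : ℝ → E) (a₁ b₁ a₂ b₂ a₃ b₃ : ℝ),
    IsQuasigeodesicOn D c₀ γ₁ a₁ b₁ → IsQuasigeodesicOn D c₀ γ₂ a₂ b₂ →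
    IsQuasigeodesicOn D c₀ γ₃ a₃ b₃ →
    γ₁ b₁ = γ₂ a₂ → γ₂ b₂ = γ₃ a₃ → γ₃ b₃ = γ₁ a₁ →
    ∀ t ∈ Set.Icc a₁ b₁, WithinOfSides D μ (γ₁ t) γ₂ a₂ b₂ γ₃ a₃ b₃

/-- `D` is a `c`-uniform domain. -/
def IsUniform (D : Set E) (c : ℝ) : Prop :=
  ∀ z₁ ∈ D, ∀ z₂ ∈ D, ∃ γ : ℝ → E, ∃ a b : ℝ, IsArc D γ a b ∧ γ a = z₁ ∧ γ b = z₂ ∧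
    (∀ t ∈ Set.Icc a b, min (t - a) (b - t) ≤ c * dB D (γ t)) ∧
    b - a ≤ c * ‖z₁ - z₂‖

/-- `D` is an `a`-John domain. -/
def IsJohn (D : Set E) (a : ℝ) : Prop :=
  ∀ z₁ ∈ D, ∀ z₂ ∈ D, ∃ γ : ℝ → E, ∃ s t : ℝ, IsArc D γ s t ∧ γ s = z₁ ∧ γ t = z₂ ∧
    ∀ u ∈ Set.Icc s t, min (u - s) (t - u) ≤ a * dB D (γ u)

/-- The inner (length) distance in `D`. -/
def innerDist (D : Set E) (x y : E) : ℝ :=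
  sInf { L : ℝ | ∃ γ : ℝ → E, ∃ s t : ℝ, IsArc D γ s t ∧ γ s = x ∧ γ t = y ∧ L = t - s }

/-- `γ` is an inner `b`-uniform curve in `D`. -/
def IsInnerUniformCurve (D : Set E) (b : ℝ) (γ : ℝ → E) (s t : ℝ) : Prop :=
  (∀ u ∈ Set.Icc s t, min (u - s) (t - u) ≤ b * dB D (γ u)) ∧
  t - s ≤ b * innerDist D (γ s) (γ t)

/-- `D` is an inner `b`-uniform domain. -/
def IsInnerUniform (D : Set E) (b : ℝ) : Prop :=
  ∀ z₁ ∈ D, ∀ z₂ ∈ D, ∃ γ : ℝ → E, ∃ s t : ℝ,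
    IsArc D γ s t ∧ γ s = z₁ ∧ γ t = z₂ ∧ IsInnerUniformCurve D b γ s t

/-- Length (total variation) of a curve on `[a,b]`. -/
def lenOn {F : Type*} [NormedAddCommGroup F] (γ : ℝ → F) (a b : ℝ) : ℝ :=
  (eVariationOn γ (Set.Icc a b)).toReal

variable {F : Type*} [NormedAddCommGroup F]

/-- `f` is a homeomorphism from `D` onto `D'`. -/
def IsHomeoOn (f : E → F) (D : Set E) (D' : Set F) : Prop :=
  ∃ g : F → E, ContinuousOn f D ∧ ContinuousOn g D' ∧ Set.MapsTo f D D' ∧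
    Set.MapsTo g D' D ∧ (∀ x ∈ D, g (f x) = x) ∧ (∀ y ∈ D', f (g y) = y)

/-- `f : D → D'` is `(M,C)`-coarsely quasihyperbolic. -/
def IsCQH (f : E → F) (D : Set E) (D' : Set F) (M C : ℝ) : Prop :=
  ∀ x ∈ D, ∀ y ∈ D,
    (qhDist D x y - C) / M ≤ qhDist D' (f x) (f y) ∧
    qhDist D' (f x) (f y) ≤ M * qhDist D x y + C

/-- The slopes `a_n` from the construction of Example 1. -/
def aseq (n : ℕ) : ℝ :=
  ((2 : ℝ) ^ (n + 1).factorial * ((2 : ℝ) ^ ((n + 2).factorial - (n + 1).factorial) - 1)) /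
    ((2 : ℝ) ^ (n + 2).factorial * ((2 : ℝ) ^ ((n + 1).factorial - n.factorial) - 1))

/-- The intercepts `b_n` from the construction of Example 1. -/
def bseq (n : ℕ) : ℝ :=
  1 - 1 / (2 : ℝ) ^ (n + 1).factorial - aseq n * (1 - 1 / (2 : ℝ) ^ n.factorial)

/-- For `t ∈ [1/2, 1)`, the index `n` with `1 - 2^{-n!} ≤ t < 1 - 2^{-(n+1)!}`. -/
def nIdx (t : ℝ) : ℕ := sSup {n : ℕ | 1 - 1 / (2 : ℝ) ^ n.factorial ≤ t}

/-- The radial homeomorphism `g : [0,2) → [0,2)` of Example 1. -/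
def gfun (t : ℝ) : ℝ :=
  if t < 1 / 2 then 3 / 2 * t
  else if t < 1 then aseq (nIdx t) * t + bseq (nIdx t)
  else t

/-- The map `f(x) = g(|x|) x / |x|` of Example 1 on the disk `B(2) ⊂ ℂ`. -/
def fmap (x : ℂ) : ℂ := if x = 0 then 0 else (gfun ‖x‖ / ‖x‖) • x

/-!
`fmap` is the identity outside the unit disk and maps the unit disk into itself. Two points
of the unit disk are at quasihyperbolic distance at most `2` in `B(2)`: the segment joining
them has length less than `2` and stays at distance at least `1` from the boundary. Hence
`k(z, f z) ≤ 2` and `k(f z, z) ≤ 2` for every `z`, and the triangle inequality for `k`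
(concatenate arcs) moves each of the two endpoints by at most `2`.
-/

open intervalIntegral

section Arcs

variable {D : Set E}

def JoinableIn (D : Set E) (x y : E) : Prop :=
  ∃ T : ℝ, ∃ γ : ℝ → E, IsArc D γ 0 T ∧ γ 0 = x ∧ γ T = y

theorem IsArc.mono {K : Set E} {γ : ℝ → E} {a b : ℝ} (hγ : IsArc K γ a b) (hKD : K ⊆ D) :
    IsArc D γ a b :=
  ⟨hγ.le, hγ.lip, hγ.unit, fun t ht => hKD (hγ.mem t ht)⟩

/-- The Lipschitz condition in `IsArc` follows from the arclength condition. -/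
theorem IsArc.of_eVariationOn {γ : ℝ → E} {a b : ℝ} (hab : a ≤ b)
    (hvar : ∀ s ∈ Icc a b, ∀ t ∈ Icc a b, s ≤ t →
      eVariationOn γ (Icc s t) = ENNReal.ofReal (t - s))
    (hmem : ∀ t ∈ Icc a b, γ t ∈ D) : IsArc D γ a b := by
  refine ⟨hab, ?_, fun s t hs ht => hvar s hs t ht, hmem⟩
  intro s hs t ht
  wlog hst : s ≤ t generalizing s t
  · rw [edist_comm, edist_comm s]
    exact this ht hs (le_of_not_ge hst)
  calc edist (γ s) (γ t) ≤ eVariationOn γ (Icc s t) :=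
        eVariationOn.edist_le γ (left_mem_Icc.2 hst) (right_mem_Icc.2 hst)
    _ = edist s t := by
        rw [hvar s hs t ht hst, edist_dist, Real.dist_eq, abs_sub_comm,
          abs_of_nonneg (sub_nonneg.2 hst)]
    _ = _ := by simp

theorem IsArc.of_dist_eq {γ : ℝ → E} {a b : ℝ} (hab : a ≤ b)
    (hdist : ∀ s ∈ Icc a b, ∀ t ∈ Icc a b, dist (γ s) (γ t) = |s - t|)
    (hmem : ∀ t ∈ Icc a b, γ t ∈ D) : IsArc D γ a b := by
  refine IsArc.of_eVariationOn hab (fun s hs t ht hst => le_antisymm ?_ ?_) hmem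
  · have hsub : Icc s t ⊆ Icc a b := Icc_subset_Icc hs.1 ht.2
    have hlip : LipschitzOnWith 1 γ (Icc s t) :=
      LipschitzOnWith.of_dist_le_mul fun u hu v hv => by
        rw [hdist u (hsub hu) v (hsub hv), Real.dist_eq, NNReal.coe_one, one_mul]
    calc eVariationOn γ (Icc s t) = eVariationOn (γ ∘ id) (Icc s t) := rfl
      _ ≤ 1 * eVariationOn id (Icc s t) := hlip.comp_eVariationOn_le (mapsTo_id _)
      _ ≤ ENNReal.ofReal (t - s) := by simp
  · calc ENNReal.ofReal (t - s) = edist (γ t) (γ s) := by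
          rw [edist_dist, hdist t ht s hs, abs_of_nonneg (sub_nonneg.2 hst)]
      _ ≤ eVariationOn γ (Icc s t) :=
          eVariationOn.edist_le γ (right_mem_Icc.2 hst) (left_mem_Icc.2 hst)

theorem qhLen_nonneg (γ : ℝ → E) {a b : ℝ} (hab : a ≤ b) : 0 ≤ qhLen D γ a b :=
  integral_nonneg hab fun _ _ => one_div_nonneg.2 infDist_nonneg

theorem qhDist_nonneg (x y : E) : 0 ≤ qhDist D x y :=
  Real.sInf_nonneg (by rintro _ ⟨T, γ, hγ, -, -, rfl⟩; exact qhLen_nonneg γ hγ.le)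

theorem qhDist_le_qhLen {γ : ℝ → E} {T : ℝ} (hγ : IsArc D γ 0 T) :
    qhDist D (γ 0) (γ T) ≤ qhLen D γ 0 T :=
  csInf_le ⟨0, by rintro _ ⟨T, γ, hγ, -, -, rfl⟩; exact qhLen_nonneg γ hγ.le⟩
    ⟨T, γ, hγ, rfl, rfl, rfl⟩

theorem le_qhDist {x y : E} {c : ℝ} (hxy : JoinableIn D x y)
    (h : ∀ T γ, IsArc D γ 0 T → γ 0 = x → γ T = y → c ≤ qhLen D γ 0 T) :
    c ≤ qhDist D x y := by
  obtain ⟨T, γ, hγ, h0, hT⟩ := hxy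
  exact le_csInf ⟨_, T, γ, hγ, h0, hT, rfl⟩
    (by rintro _ ⟨T, γ, hγ, h0, hT, rfl⟩; exact h T γ hγ h0 hT)

theorem qhDist_self {x : E} (hx : x ∈ D) : qhDist D x x = 0 := by
  have hconst : IsArc D (fun _ => x) 0 0 :=
    IsArc.of_dist_eq le_rfl (fun s hs t ht => by
      rw [dist_self, le_antisymm hs.2 hs.1, le_antisymm ht.2 ht.1, sub_self, abs_zero])
      fun _ _ => hx
  refine le_antisymm ?_ (qhDist_nonneg x x)
  simpa [qhLen] using qhDist_le_qhLen hconst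

theorem IsArc.continuousOn_one_div_dB (hD : IsOpen D) {γ : ℝ → E} {a b : ℝ}
    (hγ : IsArc D γ a b) : ContinuousOn (fun t => 1 / dB D (γ t)) (Icc a b) := by
  rcases Dᶜ.eq_empty_or_nonempty with hc | hc
  · simpa [dB, hc] using continuousOn_const
  refine continuousOn_const.div
    ((continuous_infDist_pt _).comp_continuousOn hγ.lip.continuousOn) fun t ht => ?_
  exact ((hD.isClosed_compl.notMem_iff_infDist_pos hc).1 (not_not_intro (hγ.mem t ht))).ne'

theorem IsArc.intervalIntegrable_one_div_dB (hD : IsOpen D) {γ : ℝ → E} {a b : ℝ}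
    (hγ : IsArc D γ a b) {c d : ℝ} (hcd : c ≤ d) (hsub : Icc c d ⊆ Icc a b) :
    IntervalIntegrable (fun t => 1 / dB D (γ t)) volume c d :=
  ((hγ.continuousOn_one_div_dB hD).mono (by rwa [uIcc_of_le hcd])).intervalIntegrable

end Arcs

section ArcAppend

def arcAppend {α : Type*} (β γ : ℝ → α) (L t : ℝ) : α := if t ≤ L then β t else γ (t - L)

variable {α : Type*} {β γ : ℝ → α} {L t : ℝ}

theorem arcAppend_of_le (h : t ≤ L) : arcAppend β γ L t = β t := if_pos h

theorem arcAppend_of_ge (hj : β L = γ 0) (h : L ≤ t) : arcAppend β γ L t = γ (t - L) := by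
  rcases h.eq_or_lt with rfl | h
  · rw [arcAppend_of_le le_rfl, sub_self, hj]
  · exact if_neg (not_le.2 h)

theorem eVariationOn_arcAppend_of_le [PseudoEMetricSpace α] {s : ℝ} (ht : t ≤ L) :
    eVariationOn (arcAppend β γ L) (Icc s t) = eVariationOn β (Icc s t) :=
  eVariationOn.eq_of_eqOn fun _ hu => arcAppend_of_le (hu.2.trans ht)

theorem eVariationOn_arcAppend_of_ge [PseudoEMetricSpace α] (hj : β L = γ 0) {s : ℝ}
    (hs : L ≤ s) :
    eVariationOn (arcAppend β γ L) (Icc s t) = eVariationOn γ (Icc (s - L) (t - L)) := by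
  rw [eVariationOn.eq_of_eqOn fun u hu => arcAppend_of_ge hj (hs.trans hu.1),
    ← image_sub_const_Icc]
  exact eVariationOn.comp_eq_of_monotoneOn γ (· - L) fun _ _ _ _ h => sub_le_sub_right h L

end ArcAppend

section Triangle

variable {D : Set E} {β γ : ℝ → E} {L : ℝ}

theorem IsArc.append {L₂ : ℝ} (hβ : IsArc D β 0 L) (hγ : IsArc D γ 0 L₂) (hj : β L = γ 0) :
    IsArc D (arcAppend β γ L) 0 (L + L₂) := by
  have hL := hβ.le
  have hL₂ := hγ.le
  have left : ∀ s t, 0 ≤ s → s ≤ t → t ≤ L →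
      eVariationOn (arcAppend β γ L) (Icc s t) = ENNReal.ofReal (t - s) :=
    fun s t hs hst ht => by
      rw [eVariationOn_arcAppend_of_le ht, hβ.unit s t ⟨hs, hst.trans ht⟩ ⟨hs.trans hst, ht⟩ hst]
  have right : ∀ s t, L ≤ s → s ≤ t → t ≤ L + L₂ →
      eVariationOn (arcAppend β γ L) (Icc s t) = ENNReal.ofReal (t - s) :=
    fun s t hs hst ht => by
      rw [eVariationOn_arcAppend_of_ge hj hs, hγ.unit _ _ ⟨by linarith, by linarith⟩
        ⟨by linarith, by linarith⟩ (by linarith), sub_sub_sub_cancel_right]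
  refine IsArc.of_eVariationOn (by linarith) (fun s hs t ht hst => ?_) fun t ht => ?_
  · rcases le_total t L with htL | hLt
    · exact left s t hs.1 hst htL
    rcases le_total L s with hLs | hsL
    · exact right s t hLs hst ht.2
    have hsplit := eVariationOn.Icc_add_Icc (arcAppend β γ L) hsL hLt (mem_univ L)
    simp only [univ_inter] at hsplit
    rw [← hsplit, left s L hs.1 hsL le_rfl, right L t le_rfl hLt ht.2,
      ← ENNReal.ofReal_add (by linarith) (by linarith), sub_add_sub_cancel']
  · rcases le_total t L with htL | hLt
    · rw [arcAppend_of_le htL]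
      exact hβ.mem t ⟨ht.1, htL⟩
    · rw [arcAppend_of_ge hj hLt]
      exact hγ.mem (t - L) ⟨by linarith, by linarith [ht.2]⟩

theorem qhLen_arcAppend (hD : IsOpen D) {L₂ : ℝ} (hβ : IsArc D β 0 L) (hγ : IsArc D γ 0 L₂)
    (hj : β L = γ 0) :
    qhLen D (arcAppend β γ L) 0 (L + L₂) = qhLen D β 0 L + qhLen D γ 0 L₂ := by
  have hL := hβ.le
  have hL₂ := hγ.le
  have harc := hβ.append hγ hj
  rw [qhLen, ← integral_add_adjacent_intervals
    (harc.intervalIntegrable_one_div_dB hD hL (Icc_subset_Icc le_rfl (by linarith)))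
    (harc.intervalIntegrable_one_div_dB hD (by linarith) (Icc_subset_Icc hL le_rfl))]
  congr 1
  · refine integral_congr fun u hu => ?_
    rw [uIcc_of_le hL] at hu
    simp only [arcAppend_of_le hu.2]
  · have hshift := integral_comp_sub_right (fun t => 1 / dB D (γ t)) (a := L) (b := L + L₂) L
    rw [sub_self, add_sub_cancel_left] at hshift
    rw [qhLen, ← hshift]
    refine integral_congr fun u hu => ?_
    rw [uIcc_of_le (by linarith)] at hu
    simp only [arcAppend_of_ge hj hu.1]

theorem qhDist_triangle (hD : IsOpen D) {x y z : E} (hxy : JoinableIn D x y)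
    (hyz : JoinableIn D y z) : qhDist D x z ≤ qhDist D x y + qhDist D y z := by
  have hsum : ∀ T₁ β, IsArc D β 0 T₁ → β 0 = x → β T₁ = y →
      ∀ T₂ γ, IsArc D γ 0 T₂ → γ 0 = y → γ T₂ = z →
        qhDist D x z ≤ qhLen D β 0 T₁ + qhLen D γ 0 T₂ := by
    rintro T₁ β hβ rfl rfl T₂ γ hγ hγ0 rfl
    have hj := hγ0.symm
    have hstart : arcAppend β γ T₁ 0 = β 0 := arcAppend_of_le hβ.le
    have hend : arcAppend β γ T₁ (T₁ + T₂) = γ T₂ := by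
      rw [arcAppend_of_ge hj (by linarith [hγ.le]), add_sub_cancel_left]
    rw [← qhLen_arcAppend hD hβ hγ hj, ← hstart, ← hend]
    exact qhDist_le_qhLen (hβ.append hγ hj)
  have hinf₁ : ∀ T₂ γ, IsArc D γ 0 T₂ → γ 0 = y → γ T₂ = z →
      qhDist D x z - qhLen D γ 0 T₂ ≤ qhDist D x y :=
    fun T₂ γ hγ h0 hT => le_qhDist hxy fun T₁ β hβ h0' hT' => by
      linarith [hsum T₁ β hβ h0' hT' T₂ γ hγ h0 hT]
  have hinf₂ : qhDist D x z - qhDist D x y ≤ qhDist D y z :=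
    le_qhDist hyz fun T₂ γ hγ h0 hT => by linarith [hinf₁ T₂ γ hγ h0 hT]
  linarith

theorem abs_qhDist_sub_qhDist_le {D : Set E} (hD : IsOpen D)
    (hJ : ∀ p ∈ D, ∀ q ∈ D, JoinableIn D p q) {x x' y y' : E} (hx : x ∈ D) (hx' : x' ∈ D)
    (hy : y ∈ D) (hy' : y' ∈ D) {c d : ℝ} (hxx' : qhDist D x x' ≤ c) (hx'x : qhDist D x' x ≤ c)
    (hyy' : qhDist D y y' ≤ d) (hy'y : qhDist D y' y ≤ d) :
    |qhDist D x' y' - qhDist D x y| ≤ c + d := by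
  have h₁ := qhDist_triangle hD (hJ x' hx' x hx) (hJ x hx y' hy')
  have h₂ := qhDist_triangle hD (hJ x hx y hy) (hJ y hy y' hy')
  have h₃ := qhDist_triangle hD (hJ x hx x' hx') (hJ x' hx' y hy)
  have h₄ := qhDist_triangle hD (hJ x' hx' y' hy') (hJ y' hy' y hy)
  rw [abs_sub_le_iff]
  constructor <;> linarith

end Triangle

section Segment

variable [NormedSpace ℝ E] {D K : Set E} {p q : E}

def unitSegment (p q : E) (t : ℝ) : E := p + t • ‖q - p‖⁻¹ • (q - p)

theorem unitSegment_zero : unitSegment p q 0 = p := by simp [unitSegment]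

theorem unitSegment_norm_sub : unitSegment p q ‖q - p‖ = q := by
  rcases eq_or_ne q p with rfl | hqp
  · simp [unitSegment]
  · rw [unitSegment, smul_inv_smul₀ (norm_ne_zero_iff.2 (sub_ne_zero.2 hqp)), add_sub_cancel]

theorem unitSegment_eq_add_div_smul (t : ℝ) :
    unitSegment p q t = p + (t / ‖q - p‖) • (q - p) := by
  rw [unitSegment, smul_smul, div_eq_mul_inv]

theorem dist_unitSegment {s t : ℝ} (hs : s ∈ Icc 0 ‖q - p‖) (ht : t ∈ Icc 0 ‖q - p‖) :
    dist (unitSegment p q s) (unitSegment p q t) = |s - t| := by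
  rcases eq_or_ne q p with rfl | hqp
  · simp only [sub_self, norm_zero] at hs ht
    rw [le_antisymm hs.2 hs.1, le_antisymm ht.2 ht.1, dist_self, sub_self, abs_zero]
  · rw [dist_eq_norm, unitSegment, unitSegment, add_sub_add_left_eq_sub, ← sub_smul,
      norm_smul, norm_smul, norm_inv, norm_norm,
      inv_mul_cancel₀ (norm_ne_zero_iff.2 (sub_ne_zero.2 hqp)), mul_one, Real.norm_eq_abs]

theorem Convex.unitSegment_mem (hK : Convex ℝ K) (hp : p ∈ K) (hq : q ∈ K) {t : ℝ}
    (ht : t ∈ Icc 0 ‖q - p‖) : unitSegment p q t ∈ K := by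
  rw [unitSegment_eq_add_div_smul]
  exact hK.add_smul_sub_mem hp hq
    ⟨div_nonneg ht.1 (norm_nonneg _), div_le_one_of_le₀ ht.2 (norm_nonneg _)⟩

theorem Convex.isArc_unitSegment (hK : Convex ℝ K) (hp : p ∈ K) (hq : q ∈ K) :
    IsArc K (unitSegment p q) 0 ‖q - p‖ :=
  IsArc.of_dist_eq (norm_nonneg _) (fun _ hs _ ht => dist_unitSegment hs ht)
    fun _ ht => hK.unitSegment_mem hp hq ht

theorem Convex.joinableIn (hD : Convex ℝ D) (hp : p ∈ D) (hq : q ∈ D) : JoinableIn D p q :=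
  ⟨_, _, hD.isArc_unitSegment hp hq, unitSegment_zero, unitSegment_norm_sub⟩

theorem qhDist_le_of_convex (hK : Convex ℝ K) (hKD : K ⊆ D) {m : ℝ} (hm : 0 < m)
    (hdB : ∀ z ∈ K, m ≤ dB D z) (hp : p ∈ K) (hq : q ∈ K) : qhDist D p q ≤ ‖q - p‖ / m := by
  have hbound : ∀ t ∈ uIoc 0 ‖q - p‖, ‖1 / dB D (unitSegment p q t)‖ ≤ 1 / m := fun t ht => by
    have hmt := hdB _ (hK.unitSegment_mem hp hq (Ioc_subset_Icc_self
      (by rwa [uIoc_of_le (norm_nonneg _)] at ht)))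
    rw [Real.norm_of_nonneg (one_div_nonneg.2 (hm.le.trans hmt))]
    exact one_div_le_one_div_of_le hm hmt
  calc qhDist D p q = qhDist D (unitSegment p q 0) (unitSegment p q ‖q - p‖) := by
        rw [unitSegment_zero, unitSegment_norm_sub]
    _ ≤ qhLen D (unitSegment p q) 0 ‖q - p‖ :=
        qhDist_le_qhLen ((hK.isArc_unitSegment hp hq).mono hKD)
    _ ≤ 1 / m * |‖q - p‖ - 0| := (le_abs_self _).trans (norm_integral_le_of_norm_le_const hbound)
    _ = ‖q - p‖ / m := by rw [sub_zero, abs_norm, one_div_mul_eq_div]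

end Segment

theorem sub_dist_le_dB_ball {c z : E} {R : ℝ} (hR : (ball c R)ᶜ.Nonempty) :
    R - dist z c ≤ dB (ball c R) z :=
  (le_infDist hR).2 fun w hw => by
    rw [mem_compl_iff, mem_ball, not_lt] at hw
    linarith [dist_triangle w z c, dist_comm z w]

theorem qhDist_ball_two_le_two {u v : ℂ} (hu : ‖u‖ < 1) (hv : ‖v‖ < 1) :
    qhDist (ball (0 : ℂ) 2) u v ≤ 2 := by
  have hne : (ball (0 : ℂ) 2)ᶜ.Nonempty := ⟨2, by simp⟩
  have hdB : ∀ z ∈ ball (0 : ℂ) 1, 1 ≤ dB (ball (0 : ℂ) 2) z := fun z hz => by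
    rw [mem_ball] at hz
    linarith [sub_dist_le_dB_ball (z := z) hne]
  calc qhDist (ball (0 : ℂ) 2) u v ≤ ‖v - u‖ / 1 :=
        qhDist_le_of_convex (convex_ball 0 1) (ball_subset_ball one_le_two) one_pos hdB
          (mem_ball_zero_iff.2 hu) (mem_ball_zero_iff.2 hv)
    _ ≤ 2 := by linarith [norm_sub_le v u, div_one ‖v - u‖]

section RadialMap

theorem aseq_eq (n : ℕ) :
    aseq n = 2 ^ (n + 1).factorial * (2 ^ (n + 2).factorial / 2 ^ (n + 1).factorial - 1) /
      (2 ^ (n + 2).factorial * (2 ^ (n + 1).factorial / 2 ^ n.factorial - 1)) := by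
  rw [aseq, pow_sub₀ _ two_ne_zero (Nat.factorial_le (by omega)),
    pow_sub₀ _ two_ne_zero (Nat.factorial_le (by omega))]
  simp only [div_eq_mul_inv]

theorem two_pow_factorial_lt_succ {n : ℕ} (hn : 1 ≤ n) :
    (2 : ℝ) ^ n.factorial < 2 ^ (n + 1).factorial :=
  pow_lt_pow_right₀ one_lt_two ((Nat.factorial_lt (by omega)).2 (by omega))

theorem aseq_pos {n : ℕ} (hn : 1 ≤ n) : 0 < aseq n := by
  have h₁ := two_pow_factorial_lt_succ hn
  have h₂ := two_pow_factorial_lt_succ (n := n + 1) (by omega)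
  rw [aseq_eq]
  exact div_pos (mul_pos (by positivity) (sub_pos.2 ((one_lt_div (by positivity)).2 h₂)))
    (mul_pos (by positivity) (sub_pos.2 ((one_lt_div (by positivity)).2 h₁)))

/-- `aseq n` is the ratio of the lengths of the target and the source interval of `g_n`. -/
theorem aseq_mul_sub {n : ℕ} (hn : 1 ≤ n) :
    aseq n * (1 / 2 ^ n.factorial - 1 / 2 ^ (n + 1).factorial) =
      (1 : ℝ) / 2 ^ (n + 1).factorial - 1 / 2 ^ (n + 2).factorial := by
  have h := (two_pow_factorial_lt_succ hn).ne'
  rw [aseq_eq]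
  field_simp

theorem aseq_mul_add_bseq_left (n : ℕ) :
    aseq n * (1 - 1 / 2 ^ n.factorial) + bseq n = 1 - 1 / 2 ^ (n + 1).factorial := by
  rw [bseq]; ring

theorem aseq_mul_add_bseq_right {n : ℕ} (hn : 1 ≤ n) :
    aseq n * (1 - 1 / 2 ^ (n + 1).factorial) + bseq n = 1 - 1 / 2 ^ (n + 2).factorial := by
  rw [bseq]; linear_combination aseq_mul_sub hn

theorem nIdx_spec {t : ℝ} (h₁ : 1 / 2 ≤ t) (h₂ : t < 1) :
    1 ≤ nIdx t ∧ 1 - 1 / (2 : ℝ) ^ (nIdx t).factorial ≤ t ∧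
      t < 1 - 1 / (2 : ℝ) ^ (nIdx t + 1).factorial := by
  set S := {n : ℕ | 1 - 1 / (2 : ℝ) ^ n.factorial ≤ t}
  have hS₁ : 1 ∈ S := by simp only [S, mem_ofPred_eq]; norm_num; linarith
  have hbdd : BddAbove S := by
    obtain ⟨N, hN⟩ := exists_pow_lt_of_lt_one (sub_pos.2 h₂) one_half_lt_one
    refine ⟨N, fun n hn => (Nat.self_le_factorial n).trans ?_⟩
    have hn' : ((1 : ℝ) / 2) ^ N < (1 / 2) ^ n.factorial := by
      simp only [S, mem_ofPred_eq] at hn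
      rw [one_div_pow (2 : ℝ) n.factorial]; linarith
    exact ((pow_lt_pow_iff_right_of_lt_one₀ one_half_pos one_half_lt_one).1 hn').le
  refine ⟨le_csSup hbdd hS₁, Nat.sSup_mem ⟨1, hS₁⟩ hbdd, not_le.1 fun h => ?_⟩
  exact (Nat.lt_succ_self _).not_ge (le_csSup hbdd h)

theorem gfun_mem_Ico {t : ℝ} (h₀ : 0 ≤ t) (h₁ : t < 1) : gfun t ∈ Ico 0 1 := by
  unfold gfun
  split_ifs with h
  · constructor <;> linarith
  obtain ⟨hn, hlo, hhi⟩ := nIdx_spec (not_lt.1 h) h₁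
  have ha := aseq_pos hn
  have hleft := aseq_mul_add_bseq_left (nIdx t)
  have hright := aseq_mul_add_bseq_right hn
  have hpow : (0 : ℝ) < 1 / 2 ^ (nIdx t + 2).factorial := by positivity
  have hpow' : (1 : ℝ) / 2 ^ (nIdx t + 1).factorial ≤ 1 := by
    rw [div_le_one (by positivity)]; exact one_le_pow₀ one_le_two
  constructor
  · nlinarith [mul_le_mul_of_nonneg_left hlo ha.le]
  · nlinarith [mul_lt_mul_of_pos_left hhi ha]

theorem norm_fmap_lt_one {x : ℂ} (hx : ‖x‖ < 1) : ‖fmap x‖ < 1 := by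
  unfold fmap
  split_ifs with h
  · simp
  have hpos : 0 < ‖x‖ := norm_pos_iff.2 h
  obtain ⟨hg₀, hg₁⟩ := gfun_mem_Ico hpos.le hx
  rwa [norm_smul, Real.norm_of_nonneg (div_nonneg hg₀ hpos.le), div_mul_cancel₀ _ hpos.ne']

theorem fmap_of_one_le_norm {x : ℂ} (hx : 1 ≤ ‖x‖) : fmap x = x := by
  have hpos : 0 < ‖x‖ := one_pos.trans_le hx
  rw [fmap, if_neg (norm_pos_iff.1 hpos), gfun, if_neg (by linarith), if_neg (by linarith),
    div_self hpos.ne', one_smul]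

theorem fmap_mem_ball_two {x : ℂ} (hx : x ∈ ball (0 : ℂ) 2) : fmap x ∈ ball (0 : ℂ) 2 := by
  rcases lt_or_ge ‖x‖ 1 with h | h
  · exact mem_ball_zero_iff.2 ((norm_fmap_lt_one h).trans one_lt_two)
  · rwa [fmap_of_one_le_norm h]

theorem qhDist_fmap_le_two {x : ℂ} (hx : x ∈ ball (0 : ℂ) 2) :
    qhDist (ball (0 : ℂ) 2) x (fmap x) ≤ 2 ∧ qhDist (ball (0 : ℂ) 2) (fmap x) x ≤ 2 := by
  rcases lt_or_ge ‖x‖ 1 with h | h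
  · exact ⟨qhDist_ball_two_le_two h (norm_fmap_lt_one h),
      qhDist_ball_two_le_two (norm_fmap_lt_one h) h⟩
  · rw [fmap_of_one_le_norm h, qhDist_self hx]
    norm_num

end RadialMap

/-- The map `f` of Example 1 is `(1,4)`-coarsely
quasihyperbolic on `B(2)`. -/
theorem stmt12 (x y : ℂ) (hx : x ∈ Metric.ball (0 : ℂ) 2) (hy : y ∈ Metric.ball (0 : ℂ) 2) :
    |qhDist (Metric.ball (0 : ℂ) 2) (fmap x) (fmap y) -
      qhDist (Metric.ball (0 : ℂ) 2) x y| ≤ 4 := by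
  obtain ⟨hx₁, hx₂⟩ := qhDist_fmap_le_two hx
  obtain ⟨hy₁, hy₂⟩ := qhDist_fmap_le_two hy
  have hJ : ∀ p ∈ ball (0 : ℂ) 2, ∀ q ∈ ball (0 : ℂ) 2, JoinableIn (ball (0 : ℂ) 2) p q :=
    fun _ hp _ hq => (convex_ball 0 2).joinableIn hp hq
  have h := abs_qhDist_sub_qhDist_le isOpen_ball hJ hx (fmap_mem_ball_two hx) hy
    (fmap_mem_ball_two hy) hx₁ hx₂ hy₁ hy₂
  exact h.trans (by norm_num)

end
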